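/- Disintegration for powerset kernels: let f, f1, f2 be input-preserving powerset kernels with f1 ⊙ f2 defined (dom(f2) = range(f1)). If f = f1 ⊙ f2, then π_{range(f1)} f = f1. Conversely, if f is an input-preserving powerset kernel and f1 is an input-preserving powerset kernel with dom(f1) = dom(f), range(f1) ⊆ range(f), and π_{range(f1)} f = f1, then there exists an input-preserving powerset kernel g : Mem(range(f1)) → P(Mem(range(f))) with f = f1 ⊙ g. -/

import Mathlib

/-! Input preservation means every output of a kernel restricts back to its input. For (i), the
outputs of `f1 ⊙ f2` on `d` are the outputs of `f2` on the various `u ∈ f1 d`, and these restrict to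
`range(f1)` exactly as the `u` themselves (`f2 u` being nonempty). For (ii), let `g u` be the set
of outputs of `f` restricting to `u`. An output `v ∈ g u` with `u ∈ f1 d = π f d` lies in some
`f d'`; restricting further to `dom(f)` recovers both `d'` (from `v`) and `d` (from `u`), so
`d' = d` and `⋃_{u ∈ f1 d} g u = f d`. -/

open scoped ENNReal

/-- A memory over a set `S` of variables: an assignment of a value to each
variable in `S`. -/
def Mem (Val Var : Type) (S : Set Var) : Type := S → Val

/-- Restriction (projection) of a memory to a smaller domain. -/
def restr {Val Var : Type} {S T : Set Var} (h : T ⊆ S) (m : Mem Val Var S) :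
    Mem Val Var T :=
  fun t => m ⟨t.1, h t.2⟩

/-- Two memories (over possibly different domains) agree if they coincide on the
intersection of their domains.  For `T ⊆ S`, `Agree m r` says exactly that `r`
is the restriction `m^T`. -/
def Agree {Val Var : Type} {S T : Set Var} (m : Mem Val Var S) (r : Mem Val Var T) : Prop :=
  ∀ (i : Var) (h1 : i ∈ S) (h2 : i ∈ T), m ⟨i, h1⟩ = r ⟨i, h2⟩
/-- Projection (marginalization) of a set of memories over `S` to memories over
`T` (intended for `T ⊆ S`, where it yields `{m^T : m ∈ R}`). -/
def margS {Val Var : Type} {S : Set Var} (R : Set (Mem Val Var S)) (T : Set Var) :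
    Set (Mem Val Var T) :=
  {r | ∃ m ∈ R, Agree m r}

/-- The natural join of two relations (sets of memories). -/
def natJoin {Val Var : Type} {S T : Set Var}
    (R1 : Set (Mem Val Var S)) (R2 : Set (Mem Val Var T)) :
    Set (Mem Val Var (S ∪ T)) :=
  {m | restr Set.subset_union_left m ∈ R1 ∧ restr Set.subset_union_right m ∈ R2}

/-- A powerset-kernel-shaped map on memories, with explicit domain and range. -/
structure RKernel (Val Var : Type) where
  dom : Set Var
  ran : Set Var
  f : Mem Val Var dom → Set (Mem Val Var ran)

/-- Membership in `M^P`: `K` is a powerset kernel preserving its input to its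
output: the projection of `K.f d` to the domain is `{d}`. -/
def InMP {Val Var : Type} (K : RKernel Val Var) : Prop :=
  K.dom ⊆ K.ran ∧ ∀ d, margS (K.f d) K.dom = {d}

/-- Definedness condition for parallel composition. -/
def ROplusDef {Val Var : Type} (K1 K2 : RKernel Val Var) : Prop :=
  K1.ran ∩ K2.ran = K1.dom ∩ K2.dom

/-- Parallel composition of powerset kernels. -/
def roplus {Val Var : Type} (K1 K2 : RKernel Val Var) : RKernel Val Var where
  dom := K1.dom ∪ K2.dom
  ran := K1.ran ∪ K2.ran
  f := fun d =>
    natJoin (K1.f (restr Set.subset_union_left d)) (K2.f (restr Set.subset_union_right d))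

open Classical in
/-- Sequential (Kleisli) composition of powerset kernels, defined when
`K1.ran = K2.dom` (and returning the empty kernel otherwise). -/
noncomputable def rodot {Val Var : Type} (K1 K2 : RKernel Val Var) : RKernel Val Var where
  dom := K1.dom
  ran := K2.ran
  f := fun d =>
    if h : K1.ran = K2.dom then
      {v | ∃ u ∈ K1.f d, v ∈ K2.f (restr (le_of_eq h.symm) u)}
    else ∅

/-- The identity (unit) powerset kernel on memories over `R`. -/
def unitR (Val Var : Type) (R : Set Var) : RKernel Val Var where
  dom := R
  ran := R
  f := fun d => {d}

/-- The preorder on powerset kernels: `f ⊑ g` iff `g = (f ⊕ unit_R) ⊙ h` for some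
set of variables `R` and some `h ∈ M^P` (with both compositions defined). -/
def rle {Val Var : Type} (K1 K2 : RKernel Val Var) : Prop :=
  ∃ (R : Set Var) (h : RKernel Val Var), InMP h ∧
    ROplusDef K1 (unitR Val Var R) ∧
    (roplus K1 (unitR Val Var R)).ran = h.dom ∧
    K2 = rodot (roplus K1 (unitR Val Var R)) h

/-- Marginalization of a powerset kernel to a smaller range. -/
def margKR {Val Var : Type} (K : RKernel Val Var) (T : Set Var) :
    RKernel Val Var where
  dom := K.dom
  ran := T
  f := fun d => margS (K.f d) T

variable {Val Var : Type}

theorem agree_iff_restr_eq {S T : Set Var} (h : T ⊆ S) {m : Mem Val Var S}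
    {r : Mem Val Var T} : Agree m r ↔ restr h m = r :=
  ⟨fun ha => funext fun i => ha i.1 (h i.2) i.2, fun hr _ _ _ => hr ▸ rfl⟩

theorem margS_eq_image {S T : Set Var} (h : T ⊆ S) (R : Set (Mem Val Var S)) :
    margS R T = restr h '' R := by
  ext r
  exact exists_congr fun m => and_congr_right fun _ => agree_iff_restr_eq h

theorem exists_restr_eq {S T : Set Var} (h : T ⊆ S) (w : Mem Val Var S) (u : Mem Val Var T) :
    ∃ v : Mem Val Var S, restr h v = u := by
  classical
  exact ⟨fun i => if hi : i.1 ∈ T then u ⟨i.1, hi⟩ else w i, funext fun i => by simp [restr]⟩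

theorem margS_eq_singleton_iff {S T : Set Var} (h : T ⊆ S) {R : Set (Mem Val Var S)}
    {r : Mem Val Var T} : margS R T = {r} ↔ R.Nonempty ∧ ∀ v ∈ R, restr h v = r := by
  rw [margS_eq_image h, Set.eq_singleton_iff_nonempty_unique_mem, Set.image_nonempty,
    Set.forall_mem_image]

theorem InMP.nonempty {K : RKernel Val Var} (hK : InMP K) (d : Mem Val Var K.dom) :
    (K.f d).Nonempty :=
  ((margS_eq_singleton_iff hK.1).1 (hK.2 d)).1

theorem InMP.restr_eq {K : RKernel Val Var} (hK : InMP K) {d : Mem Val Var K.dom}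
    {v : Mem Val Var K.ran} (hv : v ∈ K.f d) : restr hK.1 v = d :=
  ((margS_eq_singleton_iff hK.1).1 (hK.2 d)).2 v hv

theorem rodot_f {K₁ K₂ : RKernel Val Var} (h : K₁.ran = K₂.dom) (d : Mem Val Var K₁.dom) :
    (rodot K₁ K₂).f d = {v | ∃ u ∈ K₁.f d, v ∈ K₂.f (restr h.symm.le u)} :=
  dif_pos h

theorem margKR_rodot {K₁ K₂ : RKernel Val Var} (h : K₁.ran = K₂.dom) (hK₂ : InMP K₂) :
    margKR (rodot K₁ K₂) K₁.ran = K₁ := by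
  obtain ⟨dom₁, ran₁, f₁⟩ := K₁
  obtain ⟨dom₂, ran₂, f₂⟩ := K₂
  dsimp only at h
  subst h
  simp only [margKR, rodot, dif_pos, RKernel.mk.injEq, heq_eq_eq, true_and]
  funext d
  ext u
  rw [margS_eq_image hK₂.1]
  constructor
  · rintro ⟨v, ⟨w, hw, hv⟩, rfl⟩
    exact hK₂.restr_eq hv ▸ hw
  · intro hu
    obtain ⟨v, hv⟩ := hK₂.nonempty u
    exact ⟨v, ⟨u, hu, hv⟩, hK₂.restr_eq hv⟩

/-- Outside the image of `K` the fibre over `u` is filled with all extensions of `u`, only to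
keep the kernel input-preserving. -/
def fibreKernel (K : RKernel Val Var) (T : Set Var) (hT : T ⊆ K.ran) : RKernel Val Var where
  dom := T
  ran := K.ran
  f := fun u => {v | restr hT v = u ∧ (u ∈ restr hT '' ⋃ d, K.f d → v ∈ ⋃ d, K.f d)}

theorem inMP_fibreKernel {K : RKernel Val Var} (hK : InMP K) {T : Set Var} (hdom : K.dom ⊆ T)
    (hT : T ⊆ K.ran) : InMP (fibreKernel K T hT) := by
  refine ⟨hT, fun u => (margS_eq_singleton_iff hT).2 ⟨?_, fun v hv => hv.1⟩⟩
  by_cases hu : u ∈ restr hT '' ⋃ d, K.f d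
  · obtain ⟨v, hv, rfl⟩ := hu
    exact ⟨v, rfl, fun _ => hv⟩
  · obtain ⟨w, -⟩ := hK.nonempty (restr hdom u)
    obtain ⟨v, hv⟩ := exists_restr_eq hT w u
    exact ⟨v, hv, fun h => absurd h hu⟩

theorem rodot_margKR_fibreKernel_f {K : RKernel Val Var} (hK : InMP K) {T : Set Var}
    (hdom : K.dom ⊆ T) (hT : T ⊆ K.ran) (d : Mem Val Var K.dom) :
    (rodot (margKR K T) (fibreKernel K T hT)).f d = K.f d := by
  refine (rodot_f (K₁ := margKR K T) (K₂ := fibreKernel K T hT) rfl d).trans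
    (Set.ext fun v => ⟨?_, ?_⟩)
  · rintro ⟨_, ⟨w, hw, hwu⟩, hvw, hvf⟩
    obtain rfl := (agree_iff_restr_eq hT).1 hwu
    obtain ⟨d', hv⟩ := Set.mem_iUnion.1 (hvf ⟨w, Set.mem_iUnion.2 ⟨d, hw⟩, rfl⟩)
    -- an output of an input-preserving kernel determines its input
    have hd' : d' = d :=
      calc d' = restr hdom (restr hT v) := (hK.restr_eq hv).symm
        _ = restr hdom (restr hT w) := congrArg (restr hdom) hvw
        _ = d := hK.restr_eq hw
    exact hd' ▸ hv
  · intro hv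
    exact ⟨restr hT v, ⟨v, hv, (agree_iff_restr_eq hT).2 rfl⟩, rfl,
      fun _ => Set.mem_iUnion.2 ⟨d, hv⟩⟩

theorem eq_rodot_margKR_fibreKernel {K : RKernel Val Var} (hK : InMP K) {T : Set Var}
    (hdom : K.dom ⊆ T) (hT : T ⊆ K.ran) : K = rodot (margKR K T) (fibreKernel K T hT) := by
  obtain ⟨dom, ran, f⟩ := K
  exact congrArg (RKernel.mk dom ran)
    (funext fun d => (rodot_margKR_fibreKernel_f hK hdom hT d).symm)

theorem MP_disintegration_general {Val Var : Type} :
    (∀ f f1 f2 : RKernel Val Var, InMP f → InMP f1 → InMP f2 →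
        f1.ran = f2.dom → f = rodot f1 f2 → margKR f f1.ran = f1) ∧
    (∀ f f1 : RKernel Val Var, InMP f → InMP f1 →
        f1.dom = f.dom → f1.ran ⊆ f.ran → margKR f f1.ran = f1 →
        ∃ g : RKernel Val Var, InMP g ∧ g.dom = f1.ran ∧ g.ran = f.ran ∧
          f = rodot f1 g) := by
  refine ⟨fun f f1 f2 _ _ hf2 hran hf => hf ▸ margKR_rodot hran hf2, ?_⟩
  intro f f1 hf hf1 hdom hsub hmarg
  have hdom_sub : f.dom ⊆ f1.ran := hdom ▸ hf1.1
  refine ⟨fibreKernel f f1.ran hsub, inMP_fibreKernel hf hdom_sub hsub, rfl, rfl, ?_⟩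
  calc f = rodot (margKR f f1.ran) (fibreKernel f f1.ran hsub) :=
        eq_rodot_margKR_fibreKernel hf hdom_sub hsub
    _ = rodot f1 (fibreKernel f f1.ran hsub) := by rw [hmarg]

/-- **Disintegration for powerset kernels.**
(i) If `f1, f2 ∈ M^P`, `f1 ⊙ f2` is defined (`range(f1) = dom(f2)`) and
`f = f1 ⊙ f2`, then `π_{range(f1)} f = f1`.
(ii) Conversely, if `f, f1 ∈ M^P` with `dom(f1) = dom(f)`, `range(f1) ⊆ range(f)`
and `π_{range(f1)} f = f1`, then there is `g ∈ M^P` with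
`g : Mem(range(f1)) → P(Mem(range(f)))` and `f = f1 ⊙ g`. -/
theorem MP_disintegration {Val Var : Type} [Fintype Val] [Fintype Var] :
    (∀ f f1 f2 : RKernel Val Var, InMP f → InMP f1 → InMP f2 →
        f1.ran = f2.dom → f = rodot f1 f2 → margKR f f1.ran = f1) ∧
    (∀ f f1 : RKernel Val Var, InMP f → InMP f1 →
        f1.dom = f.dom → f1.ran ⊆ f.ran → margKR f f1.ran = f1 →
        ∃ g : RKernel Val Var, InMP g ∧ g.dom = f1.ran ∧ g.ran = f.ran ∧
          f = rodot f1 g) :=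
  MP_disintegration_general
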